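/- arXiv:2603.08963 — 3 statements merged into one kernel-verified Lean document; each statement's English description precedes it below -/
import Mathlib

section
/- Under Assumptions 1–4, each observed (Z,S) cell is associated with a unique principal stratum or a pair of strata sharing the same conditional mean potential outcomes: for all x, E{Y(1)|Z=1,S=1,X=x} = E{Y(1)|U∈{10,11},X=x}; E{Y(0)|Z=0,S=0,X=x} = E{Y(0)|U∈{00,10},X=x}; E{Y(1)|Z=1,S=0,X=x} = E{Y(1)|U=00,X=x}; and E{Y(0)|Z=0,S=1,X=x} = E{Y(0)|U=11,X=x}. -/
open MeasureTheory Filter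
open scoped Classical

noncomputable section

/-- Conditional mean of `f` given the event `A`: `E[f | A] = (∫_A f dP) / P(A)`. -/
def condMeanOn {Ω : Type*} [MeasurableSpace Ω] (P : Measure Ω) (A : Set Ω) (f : Ω → ℝ) : ℝ :=
  (∫ ω in A, f ω ∂P) / (P A).toReal

/-- Conditional probability of the event `A` given the event `B`: `P(A | B)`. -/
def condProbOn {Ω : Type*} [MeasurableSpace Ω] (P : Measure Ω) (A B : Set Ω) : ℝ :=
  (P (A ∩ B)).toReal / (P B).toReal

/-- Observed-cell outcome regression `μ_{zs}(x) = E(Y | Z = z, S = s, X = x)`. -/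
def muZS {Ω 𝓧 : Type*} [MeasurableSpace Ω] (P : Measure Ω) (X : Ω → 𝓧) (Z S Y : Ω → ℝ)
    (z s : ℝ) (x : 𝓧) : ℝ :=
  condMeanOn P {ω | Z ω = z ∧ S ω = s ∧ X ω = x} Y

/-- Propensity score `π(x) = P(Z = 1 | X = x)`. -/
def piX {Ω 𝓧 : Type*} [MeasurableSpace Ω] (P : Measure Ω) (X : Ω → 𝓧) (Z : Ω → ℝ)
    (x : 𝓧) : ℝ :=
  condProbOn P {ω | Z ω = 1} {ω | X ω = x}

/-- Principal score `p_z(x) = P(S = 1 | Z = z, X = x)`. -/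
def pZs {Ω 𝓧 : Type*} [MeasurableSpace Ω] (P : Measure Ω) (X : Ω → 𝓧) (Z S : Ω → ℝ)
    (z : ℝ) (x : 𝓧) : ℝ :=
  condProbOn P {ω | S ω = 1} {ω | Z ω = z ∧ X ω = x}

/-- Conditional principal causal effect
`τ^{(a,b)}(x) = E(Y(1) - Y(0) | S(1) = a, S(0) = b, X = x)`. -/
def tauPO {Ω 𝓧 : Type*} [MeasurableSpace Ω] (P : Measure Ω) (X : Ω → 𝓧)
    (S1 S0 Y1 Y0 : Ω → ℝ) (a b : ℝ) (x : 𝓧) : ℝ :=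
  condMeanOn P {ω | S1 ω = a ∧ S0 ω = b ∧ X ω = x} (fun ω => Y1 ω - Y0 ω)

/-- Subset propensity score `π_𝒮(x) = E(Z | 𝒮, X = x)`. -/
def subPS {Ω 𝓧 : Type*} [MeasurableSpace Ω] (P : Measure Ω) (X : Ω → 𝓧) (Z : Ω → ℝ)
    (SS : Set Ω) (x : 𝓧) : ℝ :=
  condMeanOn P (SS ∩ {ω | X ω = x}) Z


/-- `condMeanOn` only depends on the set up to a.e. equality. -/
lemma condMeanOn_congr_ae {Ω : Type*} [MeasurableSpace Ω] (P : Measure Ω)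
    {s t : Set Ω} (h : s =ᵐ[P] t) (f : Ω → ℝ) :
    condMeanOn P s f = condMeanOn P t f := by
  unfold condMeanOn
  rw [measure_congr h, setIntegral_congr_set h]

/-- Key transfer lemma: if `(Y1,Y0,S1,S0) ⟂ Z | X = x` (expressed via the product
identity on probabilities), conditioning additionally on `Z = z` does not change
conditional means of functions of `(Y1,Y0,S1,S0)`. -/
lemma condMeanOn_transfer {Ω : Type*} [MeasurableSpace Ω] (P : Measure Ω)
    [IsProbabilityMeasure P]
    (V : Ω → ℝ × ℝ × ℝ × ℝ) (hV : Measurable V) (Z : Ω → ℝ) (hZ : Measurable Z)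
    (Xx : Set Ω) (hXx : MeasurableSet Xx) (z : ℝ)
    (hA : ∀ A : Set (ℝ × ℝ × ℝ × ℝ), MeasurableSet A →
      P (V ⁻¹' A ∩ {ω | Z ω = z} ∩ Xx) * P Xx
        = P (V ⁻¹' A ∩ Xx) * P ({ω | Z ω = z} ∩ Xx))
    (A : Set (ℝ × ℝ × ℝ × ℝ)) (hAm : MeasurableSet A)
    (f : ℝ × ℝ × ℝ × ℝ → ℝ) (hf : Measurable f)
    (hx : P Xx ≠ 0) (hcell : P (V ⁻¹' A ∩ {ω | Z ω = z} ∩ Xx) ≠ 0) :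
    condMeanOn P (V ⁻¹' A ∩ {ω | Z ω = z} ∩ Xx) (fun ω => f (V ω))
      = condMeanOn P (V ⁻¹' A ∩ Xx) (fun ω => f (V ω)) := by
  have hZx : MeasurableSet {ω | Z ω = z} := hZ (measurableSet_singleton z)
  set E₁ : Set Ω := {ω | Z ω = z} ∩ Xx with hE₁
  have hz : P E₁ ≠ 0 := by
    intro h0
    exact hcell (measure_mono_null (by rw [Set.inter_assoc]; exact Set.inter_subset_right) h0)
  -- the two (scaled) pushforward measures agree
  have hMeq : (P Xx) • (P.restrict E₁).map V = (P E₁) • (P.restrict Xx).map V := by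
    refine Measure.ext fun B hB => ?_
    rw [Measure.smul_apply, Measure.smul_apply,
      Measure.map_apply hV hB, Measure.map_apply hV hB,
      Measure.restrict_apply (hV hB), Measure.restrict_apply (hV hB),
      smul_eq_mul, smul_eq_mul]
    have := hA B hB
    rw [Set.inter_assoc] at this
    rw [mul_comm, this, mul_comm]
  -- integral identity
  have hInt : (P Xx).toReal * ∫ ω in V ⁻¹' A ∩ E₁, f (V ω) ∂P
      = (P E₁).toReal * ∫ ω in V ⁻¹' A ∩ Xx, f (V ω) ∂P := by
    have h1 : ∫ v in A, f v ∂((P Xx) • (P.restrict E₁).map V)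
        = ∫ v in A, f v ∂((P E₁) • (P.restrict Xx).map V) := by rw [hMeq]
    rw [Measure.restrict_smul, Measure.restrict_smul, integral_smul_measure,
      integral_smul_measure,
      setIntegral_map hAm hf.aestronglyMeasurable hV.aemeasurable,
      setIntegral_map hAm hf.aestronglyMeasurable hV.aemeasurable,
      Measure.restrict_restrict (hV hAm), Measure.restrict_restrict (hV hAm),
      smul_eq_mul, smul_eq_mul] at h1
    exact h1
  -- probability identity
  have hP : (P Xx).toReal * (P (V ⁻¹' A ∩ E₁)).toReal
      = (P E₁).toReal * (P (V ⁻¹' A ∩ Xx)).toReal := by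
    have h2 := hA A hAm
    rw [Set.inter_assoc] at h2
    rw [← ENNReal.toReal_mul, ← ENNReal.toReal_mul, mul_comm, h2, mul_comm]
  set c := (P Xx).toReal with hc'
  set d := (P E₁).toReal with hd'
  set n₁ := ∫ ω in V ⁻¹' A ∩ E₁, f (V ω) ∂P
  set n₂ := ∫ ω in V ⁻¹' A ∩ Xx, f (V ω) ∂P
  set p₁ := (P (V ⁻¹' A ∩ E₁)).toReal with hp₁'
  set p₂ := (P (V ⁻¹' A ∩ Xx)).toReal with hp₂'
  have hcne : c ≠ 0 := ENNReal.toReal_ne_zero.mpr ⟨hx, measure_ne_top _ _⟩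
  have hdne : d ≠ 0 := ENNReal.toReal_ne_zero.mpr ⟨hz, measure_ne_top _ _⟩
  have hcell' : P (V ⁻¹' A ∩ E₁) ≠ 0 := by rwa [← Set.inter_assoc]
  have hp₁ne : p₁ ≠ 0 := ENNReal.toReal_ne_zero.mpr ⟨hcell', measure_ne_top _ _⟩
  have hp₂ne : p₂ ≠ 0 := by
    intro h0
    apply mul_ne_zero hcne hp₁ne
    rw [hP, h0, mul_zero]
  unfold condMeanOn
  rw [Set.inter_assoc]
  show n₁ / p₁ = n₂ / p₂
  rw [div_eq_div_iff hp₁ne hp₂ne]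
  refine mul_left_cancel₀ (mul_ne_zero hcne hdne) ?_
  linear_combination (d * p₂) * hInt - (d * n₂) * hP

/-- Lemma: each observed (Z,S) cell is associated with a unique principal stratum or a
pair of strata sharing the same conditional mean potential outcomes. -/
theorem observed_cell_principal_stratum_association
    {Ω : Type*} [MeasurableSpace Ω] (P : Measure Ω) [IsProbabilityMeasure P]
    {d : ℕ} (X : Ω → Fin d → ℝ) (Y Z S Y1 Y0 S1 S0 : Ω → ℝ)
    (hXm : Measurable X) (hYm : Measurable Y) (hZm : Measurable Z) (hSm : Measurable S)
    (hY1m : Measurable Y1) (hY0m : Measurable Y0) (hS1m : Measurable S1) (hS0m : Measurable S0)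
    (hZ01 : ∀ ω, Z ω = 0 ∨ Z ω = 1) (hS01 : ∀ ω, S ω = 0 ∨ S ω = 1)
    (hS1b : ∀ ω, S1 ω = 0 ∨ S1 ω = 1) (hS0b : ∀ ω, S0 ω = 0 ∨ S0 ω = 1)
    -- Assumption 1 (consistency)
    (hA1 : ∀ ω, Y ω = Y1 ω * Z ω + Y0 ω * (1 - Z ω) ∧ S ω = S1 ω * Z ω + S0 ω * (1 - Z ω))
    -- Assumption 2 (treatment ignorability): (Y(1),Y(0),S(1),S(0)) ⟂ Z | X
    (hA2 : ∀ (x : Fin d → ℝ) (A : Set (ℝ × ℝ × ℝ × ℝ)), MeasurableSet A → ∀ z : ℝ,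
      P ({ω | (Y1 ω, Y0 ω, S1 ω, S0 ω) ∈ A} ∩ {ω | Z ω = z} ∩ {ω | X ω = x})
          * P {ω | X ω = x}
        = P ({ω | (Y1 ω, Y0 ω, S1 ω, S0 ω) ∈ A} ∩ {ω | X ω = x})
            * P ({ω | Z ω = z} ∩ {ω | X ω = x}))
    -- Assumption 3 (monotonicity)
    (hA3 : ∀ᵐ ω ∂P, S0 ω ≤ S1 ω)
    -- Assumption 4 (principal ignorability)
    (hA4 : ∀ x : Fin d → ℝ, P {ω | X ω = x} ≠ 0 →
      condMeanOn P {ω | S1 ω = 1 ∧ S0 ω = 1 ∧ X ω = x} Y1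
          = condMeanOn P {ω | S1 ω = 1 ∧ S0 ω = 0 ∧ X ω = x} Y1 ∧
        condMeanOn P {ω | S1 ω = 0 ∧ S0 ω = 0 ∧ X ω = x} Y0
          = condMeanOn P {ω | S1 ω = 1 ∧ S0 ω = 0 ∧ X ω = x} Y0)
    :
    ∀ x : Fin d → ℝ,
      P {ω | X ω = x} ≠ 0 →
      (∀ z s : ℝ, (z = 0 ∨ z = 1) → (s = 0 ∨ s = 1) →
        P {ω | Z ω = z ∧ S ω = s ∧ X ω = x} ≠ 0) →
      (∀ a b : ℝ, ((a = 1 ∧ b = 1) ∨ (a = 1 ∧ b = 0) ∨ (a = 0 ∧ b = 0)) →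
        P {ω | S1 ω = a ∧ S0 ω = b ∧ X ω = x} ≠ 0) →
      (condMeanOn P {ω | Z ω = 1 ∧ S ω = 1 ∧ X ω = x} Y1
          = condMeanOn P {ω | S1 ω = 1 ∧ (S0 ω = 0 ∨ S0 ω = 1) ∧ X ω = x} Y1) ∧
      (condMeanOn P {ω | Z ω = 0 ∧ S ω = 0 ∧ X ω = x} Y0
          = condMeanOn P {ω | (S1 ω = 0 ∨ S1 ω = 1) ∧ S0 ω = 0 ∧ X ω = x} Y0) ∧
      (condMeanOn P {ω | Z ω = 1 ∧ S ω = 0 ∧ X ω = x} Y1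
          = condMeanOn P {ω | S1 ω = 0 ∧ S0 ω = 0 ∧ X ω = x} Y1) ∧
      (condMeanOn P {ω | Z ω = 0 ∧ S ω = 1 ∧ X ω = x} Y0
          = condMeanOn P {ω | S1 ω = 1 ∧ S0 ω = 1 ∧ X ω = x} Y0) := by
  intro x hx hcells _hstrata
  have hV : Measurable (fun ω => (Y1 ω, Y0 ω, S1 ω, S0 ω)) :=
    hY1m.prodMk (hY0m.prodMk (hS1m.prodMk hS0m))
  have hXx : MeasurableSet {ω | X ω = x} := hXm (measurableSet_singleton x)
  have hig : ∀ (z : ℝ) (A : Set (ℝ × ℝ × ℝ × ℝ)), MeasurableSet A →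
      P ((fun ω => (Y1 ω, Y0 ω, S1 ω, S0 ω)) ⁻¹' A ∩ {ω | Z ω = z} ∩ {ω | X ω = x})
          * P {ω | X ω = x}
        = P ((fun ω => (Y1 ω, Y0 ω, S1 ω, S0 ω)) ⁻¹' A ∩ {ω | X ω = x})
            * P ({ω | Z ω = z} ∩ {ω | X ω = x}) :=
    fun z A hAm => hA2 x A hAm z
  have hSeq1 : ∀ ω, Z ω = 1 → S ω = S1 ω := by
    intro ω hz
    have h := (hA1 ω).2
    rw [hz] at h
    simpa using h
  have hSeq0 : ∀ ω, Z ω = 0 → S ω = S0 ω := by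
    intro ω hz
    have h := (hA1 ω).2
    rw [hz] at h
    simpa using h
  -- measurable coordinate sets
  have hmS1_1 : MeasurableSet {v : ℝ × ℝ × ℝ × ℝ | v.2.2.1 = 1} :=
    measurable_snd.snd.fst (measurableSet_singleton (1 : ℝ))
  have hmS1_0 : MeasurableSet {v : ℝ × ℝ × ℝ × ℝ | v.2.2.1 = 0} :=
    measurable_snd.snd.fst (measurableSet_singleton (0 : ℝ))
  have hmS0_1 : MeasurableSet {v : ℝ × ℝ × ℝ × ℝ | v.2.2.2 = 1} :=
    measurable_snd.snd.snd (measurableSet_singleton (1 : ℝ))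
  have hmS0_0 : MeasurableSet {v : ℝ × ℝ × ℝ × ℝ | v.2.2.2 = 0} :=
    measurable_snd.snd.snd (measurableSet_singleton (0 : ℝ))
  -- cell set identities
  have hset11 : {ω | Z ω = 1 ∧ S ω = 1 ∧ X ω = x}
      = (fun ω => (Y1 ω, Y0 ω, S1 ω, S0 ω)) ⁻¹' {v | v.2.2.1 = 1}
          ∩ {ω | Z ω = 1} ∩ {ω | X ω = x} := by
    ext ω
    simp only [Set.mem_setOf_eq, Set.mem_inter_iff, Set.mem_preimage]
    constructor
    · rintro ⟨hz, hs, hxx⟩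
      exact ⟨⟨((hSeq1 ω hz).symm.trans hs), hz⟩, hxx⟩
    · rintro ⟨⟨h1, hz⟩, hxx⟩
      exact ⟨hz, (hSeq1 ω hz).trans h1, hxx⟩
  have hset10 : {ω | Z ω = 1 ∧ S ω = 0 ∧ X ω = x}
      = (fun ω => (Y1 ω, Y0 ω, S1 ω, S0 ω)) ⁻¹' {v | v.2.2.1 = 0}
          ∩ {ω | Z ω = 1} ∩ {ω | X ω = x} := by
    ext ω
    simp only [Set.mem_setOf_eq, Set.mem_inter_iff, Set.mem_preimage]
    constructor
    · rintro ⟨hz, hs, hxx⟩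
      exact ⟨⟨((hSeq1 ω hz).symm.trans hs), hz⟩, hxx⟩
    · rintro ⟨⟨h1, hz⟩, hxx⟩
      exact ⟨hz, (hSeq1 ω hz).trans h1, hxx⟩
  have hset00 : {ω | Z ω = 0 ∧ S ω = 0 ∧ X ω = x}
      = (fun ω => (Y1 ω, Y0 ω, S1 ω, S0 ω)) ⁻¹' {v | v.2.2.2 = 0}
          ∩ {ω | Z ω = 0} ∩ {ω | X ω = x} := by
    ext ω
    simp only [Set.mem_setOf_eq, Set.mem_inter_iff, Set.mem_preimage]
    constructor
    · rintro ⟨hz, hs, hxx⟩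
      exact ⟨⟨((hSeq0 ω hz).symm.trans hs), hz⟩, hxx⟩
    · rintro ⟨⟨h1, hz⟩, hxx⟩
      exact ⟨hz, (hSeq0 ω hz).trans h1, hxx⟩
  have hset01 : {ω | Z ω = 0 ∧ S ω = 1 ∧ X ω = x}
      = (fun ω => (Y1 ω, Y0 ω, S1 ω, S0 ω)) ⁻¹' {v | v.2.2.2 = 1}
          ∩ {ω | Z ω = 0} ∩ {ω | X ω = x} := by
    ext ω
    simp only [Set.mem_setOf_eq, Set.mem_inter_iff, Set.mem_preimage]
    constructor
    · rintro ⟨hz, hs, hxx⟩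
      exact ⟨⟨((hSeq0 ω hz).symm.trans hs), hz⟩, hxx⟩
    · rintro ⟨⟨h1, hz⟩, hxx⟩
      exact ⟨hz, (hSeq0 ω hz).trans h1, hxx⟩
  refine ⟨?_, ?_, ?_, ?_⟩
  · -- cell Z=1, S=1
    have hcell := hcells 1 1 (Or.inr rfl) (Or.inr rfl)
    rw [hset11] at hcell
    have key := condMeanOn_transfer P _ hV Z hZm _ hXx 1 (hig 1)
      {v | v.2.2.1 = 1} hmS1_1 (fun v => v.1) measurable_fst hx hcell
    have hrhs : {ω | S1 ω = 1 ∧ (S0 ω = 0 ∨ S0 ω = 1) ∧ X ω = x}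
        = (fun ω => (Y1 ω, Y0 ω, S1 ω, S0 ω)) ⁻¹' {v | v.2.2.1 = 1} ∩ {ω | X ω = x} := by
      ext ω
      simp only [Set.mem_setOf_eq, Set.mem_inter_iff, Set.mem_preimage]
      exact ⟨fun ⟨h1, _, hxx⟩ => ⟨h1, hxx⟩, fun ⟨h1, hxx⟩ => ⟨h1, hS0b ω, hxx⟩⟩
    rw [hset11, hrhs]
    exact key
  · -- cell Z=0, S=0
    have hcell := hcells 0 0 (Or.inl rfl) (Or.inl rfl)
    rw [hset00] at hcell
    have key := condMeanOn_transfer P _ hV Z hZm _ hXx 0 (hig 0)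
      {v | v.2.2.2 = 0} hmS0_0 (fun v => v.2.1) measurable_snd.fst hx hcell
    have hrhs : {ω | (S1 ω = 0 ∨ S1 ω = 1) ∧ S0 ω = 0 ∧ X ω = x}
        = (fun ω => (Y1 ω, Y0 ω, S1 ω, S0 ω)) ⁻¹' {v | v.2.2.2 = 0} ∩ {ω | X ω = x} := by
      ext ω
      simp only [Set.mem_setOf_eq, Set.mem_inter_iff, Set.mem_preimage]
      exact ⟨fun ⟨_, h0, hxx⟩ => ⟨h0, hxx⟩, fun ⟨h0, hxx⟩ => ⟨hS1b ω, h0, hxx⟩⟩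
    rw [hset00, hrhs]
    exact key
  · -- cell Z=1, S=0
    have hcell := hcells 1 0 (Or.inr rfl) (Or.inl rfl)
    rw [hset10] at hcell
    have key := condMeanOn_transfer P _ hV Z hZm _ hXx 1 (hig 1)
      {v | v.2.2.1 = 0} hmS1_0 (fun v => v.1) measurable_fst hx hcell
    have hae : ((fun ω => (Y1 ω, Y0 ω, S1 ω, S0 ω)) ⁻¹' {v | v.2.2.1 = 0} ∩ {ω | X ω = x} : Set Ω)
        =ᵐ[P] ({ω | S1 ω = 0 ∧ S0 ω = 0 ∧ X ω = x} : Set Ω) := by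
      refine Filter.eventuallyEq_set.mpr ?_
      filter_upwards [hA3] with ω hm
      simp only [Set.mem_setOf_eq, Set.mem_inter_iff, Set.mem_preimage]
      constructor
      · rintro ⟨h1, hxx⟩
        rcases hS0b ω with h0 | h0
        · exact ⟨h1, h0, hxx⟩
        · exfalso; rw [h0, h1] at hm; linarith
      · rintro ⟨h1, _, hxx⟩
        exact ⟨h1, hxx⟩
    rw [hset10]
    exact key.trans (condMeanOn_congr_ae P hae Y1)
  · -- cell Z=0, S=1
    have hcell := hcells 0 1 (Or.inl rfl) (Or.inr rfl)
    rw [hset01] at hcell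
    have key := condMeanOn_transfer P _ hV Z hZm _ hXx 0 (hig 0)
      {v | v.2.2.2 = 1} hmS0_1 (fun v => v.2.1) measurable_snd.fst hx hcell
    have hae : ((fun ω => (Y1 ω, Y0 ω, S1 ω, S0 ω)) ⁻¹' {v | v.2.2.2 = 1} ∩ {ω | X ω = x} : Set Ω)
        =ᵐ[P] ({ω | S1 ω = 1 ∧ S0 ω = 1 ∧ X ω = x} : Set Ω) := by
      refine Filter.eventuallyEq_set.mpr ?_
      filter_upwards [hA3] with ω hm
      simp only [Set.mem_setOf_eq, Set.mem_inter_iff, Set.mem_preimage]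
      constructor
      · rintro ⟨h0, hxx⟩
        rcases hS1b ω with h1 | h1
        · exfalso; rw [h0, h1] at hm; linarith
        · exact ⟨h1, h0, hxx⟩
      · rintro ⟨_, h0, hxx⟩
        exact ⟨h0, hxx⟩
    rw [hset01]
    exact key.trans (condMeanOn_congr_ae P hae Y0)
end
end

section
/- (EIF identification of the CPCEs.) Under Assumptions 1–4, for each u ∈ {00,10,11}: (i) the denominator score identifies the principal score, E[g^u(W)|X=x] = e^u(x) for all x; and (ii) the CPCE is identified by the efficient-influence-function ratio, τ^u(x) = E[ (φ_{1,u}(W) − φ_{0,u}(W)) / E(g^u(W)|X) | X=x ] for all x. -/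
open MeasureTheory Filter
open scoped Classical

noncomputable section

/-- Augmented score `ψ_{a,f}(W)` built from the true nuisance functions:
`ψ_{a,f}(W) = 1(Z = a)/P(Z = a | X) · (f(W) - E[f | X, Z = a]) + E[f | X, Z = a]`. -/
def psiA {Ω 𝓧 : Type*} [MeasurableSpace Ω] (P : Measure Ω) (X : Ω → 𝓧) (Z : Ω → ℝ)
    (a : ℝ) (f : Ω → ℝ) : Ω → ℝ :=
  fun ω =>
    (if Z ω = a then (1 : ℝ) else 0) / condProbOn P {ω' | Z ω' = a} {ω' | X ω' = X ω}
        * (f ω - condMeanOn P {ω' | Z ω' = a ∧ X ω' = X ω} f)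
      + condMeanOn P {ω' | Z ω' = a ∧ X ω' = X ω} f

/-- EIF component `φ_{1,10}`. -/
def phiA1_10 {Ω 𝓧 : Type*} [MeasurableSpace Ω] (P : Measure Ω) (X : Ω → 𝓧)
    (Z S Y : Ω → ℝ) : Ω → ℝ :=
  fun ω =>
    ((pZs P X Z S 1 (X ω) - pZs P X Z S 0 (X ω)) / pZs P X Z S 1 (X ω))
        * psiA P X Z 1 (fun ω' => Y ω' * S ω') ω
      - muZS P X Z S Y 1 1 (X ω)
          * (psiA P X Z 0 S ω
              - (pZs P X Z S 0 (X ω) / pZs P X Z S 1 (X ω)) * psiA P X Z 1 S ω)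

/-- EIF component `φ_{0,10}`. -/
def phiA0_10 {Ω 𝓧 : Type*} [MeasurableSpace Ω] (P : Measure Ω) (X : Ω → 𝓧)
    (Z S Y : Ω → ℝ) : Ω → ℝ :=
  fun ω =>
    ((pZs P X Z S 1 (X ω) - pZs P X Z S 0 (X ω)) / (1 - pZs P X Z S 0 (X ω)))
        * psiA P X Z 0 (fun ω' => Y ω' * (1 - S ω')) ω
      - muZS P X Z S Y 0 0 (X ω)
          * (psiA P X Z 1 (fun ω' => 1 - S ω') ω
              - ((1 - pZs P X Z S 1 (X ω)) / (1 - pZs P X Z S 0 (X ω)))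
                  * psiA P X Z 0 (fun ω' => 1 - S ω') ω)

/-- EIF component `φ_{1,11}`. -/
def phiA1_11 {Ω 𝓧 : Type*} [MeasurableSpace Ω] (P : Measure Ω) (X : Ω → 𝓧)
    (Z S Y : Ω → ℝ) : Ω → ℝ :=
  fun ω =>
    (pZs P X Z S 0 (X ω) / pZs P X Z S 1 (X ω))
        * psiA P X Z 1 (fun ω' => Y ω' * S ω') ω
      + muZS P X Z S Y 1 1 (X ω)
          * (psiA P X Z 0 S ω
              - (pZs P X Z S 0 (X ω) / pZs P X Z S 1 (X ω)) * psiA P X Z 1 S ω)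

/-- EIF component `φ_{0,11}`. -/
def phiA0_11 {Ω 𝓧 : Type*} [MeasurableSpace Ω] (P : Measure Ω) (X : Ω → 𝓧)
    (Z S Y : Ω → ℝ) : Ω → ℝ :=
  psiA P X Z 0 (fun ω' => Y ω' * S ω')

/-- EIF component `φ_{1,00}`. -/
def phiA1_00 {Ω 𝓧 : Type*} [MeasurableSpace Ω] (P : Measure Ω) (X : Ω → 𝓧)
    (Z S Y : Ω → ℝ) : Ω → ℝ :=
  psiA P X Z 1 (fun ω' => Y ω' * (1 - S ω'))

/-- EIF component `φ_{0,00}`. -/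
def phiA0_00 {Ω 𝓧 : Type*} [MeasurableSpace Ω] (P : Measure Ω) (X : Ω → 𝓧)
    (Z S Y : Ω → ℝ) : Ω → ℝ :=
  fun ω =>
    ((1 - pZs P X Z S 1 (X ω)) / (1 - pZs P X Z S 0 (X ω)))
        * psiA P X Z 0 (fun ω' => Y ω' * (1 - S ω')) ω
      + muZS P X Z S Y 0 0 (X ω)
          * (psiA P X Z 1 (fun ω' => 1 - S ω') ω
              - ((1 - pZs P X Z S 1 (X ω)) / (1 - pZs P X Z S 0 (X ω)))
                  * psiA P X Z 0 (fun ω' => 1 - S ω') ω)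

/-- Denominator score `g^{00} = ψ_{1,1-S}`. -/
def gA00 {Ω 𝓧 : Type*} [MeasurableSpace Ω] (P : Measure Ω) (X : Ω → 𝓧)
    (Z S : Ω → ℝ) : Ω → ℝ :=
  psiA P X Z 1 (fun ω' => 1 - S ω')

/-- Denominator score `g^{10} = ψ_{1,S} - ψ_{0,S}`. -/
def gA10 {Ω 𝓧 : Type*} [MeasurableSpace Ω] (P : Measure Ω) (X : Ω → 𝓧)
    (Z S : Ω → ℝ) : Ω → ℝ :=
  fun ω => psiA P X Z 1 S ω - psiA P X Z 0 S ω

/-- Denominator score `g^{11} = ψ_{0,S}`. -/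
def gA11 {Ω 𝓧 : Type*} [MeasurableSpace Ω] (P : Measure Ω) (X : Ω → 𝓧)
    (Z S : Ω → ℝ) : Ω → ℝ :=
  psiA P X Z 0 S

/-! Fix `x` with `P(X = x) > 0`. Averaged over the fiber `{X = x}`, the augmented score
`ψ_{a,f}` has mean `E[f | Z = a, X = x]`, since its inverse-propensity term has conditional mean
zero. Hence the denominator scores average to the principal scores, and
`E[φ_{1,u} - φ_{0,u} | X = x] = e^u(x) (μ_{1s}(x) - μ_{0s'}(x))` for the appropriate observed
cells. Ignorability gives the potential outcomes the same conditional law given `(Z = z, X = x)`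
as given `X = x`, so by consistency `μ_{zs}(x) = E[Y(z) | S(z) = s, X = x]`. Finally
`{S(1) = 1}` splits into the strata `11` and `10`, on which `Y(1)` has equal means by principal
ignorability, while by monotonicity `{S(0) = 1}` is a.s. the stratum `11`; symmetrically for
`Y(0)`. This identifies each `τ^u(x)` with the same difference of cell means.
-/

section CondMean

variable {Ω : Type*} [MeasurableSpace Ω] {P : Measure Ω} {A B : Set Ω} {f g : Ω → ℝ}

lemma condMeanOn_congr_fun (hA : MeasurableSet A) (h : Set.EqOn f g A) :
    condMeanOn P A f = condMeanOn P A g := by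
  rw [condMeanOn, condMeanOn, setIntegral_congr_fun hA h]

lemma condMeanOn_congr_set (h : A =ᵐ[P] B) : condMeanOn P A f = condMeanOn P B f := by
  rw [condMeanOn, condMeanOn, setIntegral_congr_set h, measure_congr h]

lemma condMeanOn_add (hf : IntegrableOn f A P) (hg : IntegrableOn g A P) :
    condMeanOn P A (fun ω => f ω + g ω) = condMeanOn P A f + condMeanOn P A g := by
  rw [condMeanOn, integral_add hf hg, add_div]; rfl

lemma condMeanOn_sub (hf : IntegrableOn f A P) (hg : IntegrableOn g A P) :
    condMeanOn P A (fun ω => f ω - g ω) = condMeanOn P A f - condMeanOn P A g := by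
  rw [condMeanOn, integral_sub hf hg, sub_div]; rfl

lemma condMeanOn_const_mul (c : ℝ) (f : Ω → ℝ) :
    condMeanOn P A (fun ω => c * f ω) = c * condMeanOn P A f := by
  rw [condMeanOn, integral_const_mul, mul_div_assoc]; rfl

lemma condMeanOn_div_const (f : Ω → ℝ) (c : ℝ) :
    condMeanOn P A (fun ω => f ω / c) = condMeanOn P A f / c := by
  rw [condMeanOn, integral_div, div_right_comm]; rfl

lemma condMeanOn_indicator_one (hB : MeasurableSet B) :
    condMeanOn P A (B.indicator 1) = condProbOn P B A := by
  rw [condMeanOn, setIntegral_indicator hB, condProbOn, Set.inter_comm B A]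
  simp [measureReal_def]

lemma condMeanOn_div_condMeanOn_fiber {𝓧 : Type*} {X : Ω → 𝓧} {x : 𝓧}
    (hD : MeasurableSet {ω | X ω = x}) (h g : Ω → ℝ) :
    condMeanOn P {ω | X ω = x} (fun ω => h ω / condMeanOn P {ω' | X ω' = X ω} g)
      = condMeanOn P {ω | X ω = x} h / condMeanOn P {ω | X ω = x} g := by
  rw [← condMeanOn_div_const]
  exact condMeanOn_congr_fun hD fun ω (hω : X ω = x) => by rw [hω]

variable [IsFiniteMeasure P]

lemma integrableOn_indicator_one (hB : MeasurableSet B) :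
    IntegrableOn (B.indicator (1 : Ω → ℝ)) A P :=
  (integrableOn_const (measure_ne_top P A) : IntegrableOn (fun _ => (1 : ℝ)) A P).indicator hB

lemma condMeanOn_const (hA : P A ≠ 0) (c : ℝ) : condMeanOn P A (fun _ => c) = c := by
  rw [condMeanOn, setIntegral_const, smul_eq_mul, measureReal_def,
    mul_div_cancel_left₀ _ (ENNReal.toReal_ne_zero.2 ⟨hA, measure_ne_top P A⟩)]

lemma setIntegral_eq_condMeanOn_mul (f : Ω → ℝ) :
    ∫ ω in A, f ω ∂P = condMeanOn P A f * (P A).toReal := by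
  by_cases hA : P A = 0
  · rw [setIntegral_measure_zero f hA, hA, ENNReal.toReal_zero, mul_zero]
  · rw [condMeanOn, div_mul_cancel₀ _ (ENNReal.toReal_ne_zero.2 ⟨hA, measure_ne_top P A⟩)]

lemma condMeanOn_indicator (hB : MeasurableSet B) (f : Ω → ℝ) :
    condMeanOn P A (B.indicator f) = condMeanOn P (A ∩ B) f * condProbOn P B A := by
  rw [condMeanOn, setIntegral_indicator hB, setIntegral_eq_condMeanOn_mul, condProbOn,
    Set.inter_comm B A, mul_div_assoc]

lemma condMeanOn_union_of_eq (hB : MeasurableSet B) (hAB : Disjoint A B)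
    (hfA : IntegrableOn f A P) (hfB : IntegrableOn f B P)
    (h : condMeanOn P A f = condMeanOn P B f) :
    condMeanOn P (A ∪ B) f = condMeanOn P A f := by
  by_cases hU : P (A ∪ B) = 0
  · have hA : P A = 0 := measure_mono_null Set.subset_union_left hU
    rw [condMeanOn, condMeanOn, hU, hA]
    simp
  rw [condMeanOn, setIntegral_union hAB hB hfA hfB, setIntegral_eq_condMeanOn_mul f,
    setIntegral_eq_condMeanOn_mul (A := B) f, ← h, ← mul_add,
    ← ENNReal.toReal_add (measure_ne_top P A) (measure_ne_top P B), ← measure_union hAB hB,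
    mul_div_cancel_right₀ _ (ENNReal.toReal_ne_zero.2 ⟨hU, measure_ne_top P _⟩)]

end CondMean

section Transfer

variable {Ω β : Type*} [MeasurableSpace Ω] [MeasurableSpace β] {P : Measure Ω} {V : Ω → β}
  {C D : Set Ω}

-- `hCD` says that `V` has the same conditional law given `C` as given `D`.
lemma smul_map_restrict_eq_of_proportional (hV : Measurable V)
    (hCD : ∀ A, MeasurableSet A → P (V ⁻¹' A ∩ C) * P D = P (V ⁻¹' A ∩ D) * P C) :
    P D • (P.restrict C).map V = P C • (P.restrict D).map V := by
  ext A hA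
  simp only [Measure.smul_apply, Measure.map_apply hV hA, Measure.restrict_apply (hV hA),
    smul_eq_mul, mul_comm (P D), mul_comm (P C)]
  exact hCD A hA

variable [IsFiniteMeasure P]

lemma condMeanOn_comp_eq_of_proportional (hV : Measurable V)
    (hCD : ∀ A, MeasurableSet A → P (V ⁻¹' A ∩ C) * P D = P (V ⁻¹' A ∩ D) * P C)
    (hC : P C ≠ 0) (hD : P D ≠ 0) {B : Set β} (hB : MeasurableSet B) {g : β → ℝ}
    (hg : Measurable g) :
    condMeanOn P (V ⁻¹' B ∩ C) (fun ω => g (V ω))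
      = condMeanOn P (V ⁻¹' B ∩ D) (fun ω => g (V ω)) := by
  have key := smul_map_restrict_eq_of_proportional hV hCD
  have hI := congrArg (fun μ => ∫ y in B, g y ∂μ) key
  have hM := congrArg (fun μ => (μ B).toReal) key
  simp only [Measure.restrict_smul, integral_smul_measure, Measure.smul_apply, smul_eq_mul,
    ENNReal.toReal_mul, setIntegral_map hB hg.aestronglyMeasurable hV.aemeasurable,
    Measure.map_apply hV hB, Measure.restrict_restrict (hV hB),
    Measure.restrict_apply (hV hB)] at hI hM
  have hC' : (P C).toReal ≠ 0 := ENNReal.toReal_ne_zero.2 ⟨hC, measure_ne_top P C⟩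
  have hD' : (P D).toReal ≠ 0 := ENNReal.toReal_ne_zero.2 ⟨hD, measure_ne_top P D⟩
  rw [condMeanOn, condMeanOn, ← mul_div_mul_left _ _ hD', hI, hM, mul_div_mul_left _ _ hC']

lemma integrableOn_comp_iff_of_proportional (hV : Measurable V)
    (hCD : ∀ A, MeasurableSet A → P (V ⁻¹' A ∩ C) * P D = P (V ⁻¹' A ∩ D) * P C)
    (hC : P C ≠ 0) (hD : P D ≠ 0) {B : Set β} (hB : MeasurableSet B) {g : β → ℝ}
    (hg : Measurable g) :
    IntegrableOn (fun ω => g (V ω)) (V ⁻¹' B ∩ C) P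
      ↔ IntegrableOn (fun ω => g (V ω)) (V ⁻¹' B ∩ D) P := by
  have key := congrArg (fun μ => μ.restrict B) (smul_map_restrict_eq_of_proportional hV hCD)
  have hmap : ∀ E : Set Ω, IntegrableOn (fun ω => g (V ω)) (V ⁻¹' B ∩ E) P
      ↔ IntegrableOn g B ((P.restrict E).map V) := by
    intro E
    rw [IntegrableOn, IntegrableOn, Measure.restrict_map hV hB, integrable_map_measure
      hg.aestronglyMeasurable hV.aemeasurable, Measure.restrict_restrict (hV hB)]
    rfl
  simp only [Measure.restrict_smul] at key
  rw [hmap, hmap, IntegrableOn, IntegrableOn,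
    ← integrable_smul_measure hD (measure_ne_top P D), key,
    integrable_smul_measure hC (measure_ne_top P C)]

end Transfer

section AugmentedScore

variable {Ω 𝓧 : Type*} [MeasurableSpace Ω] {P : Measure Ω} {X : Ω → 𝓧} {Z : Ω → ℝ} {x : 𝓧}

lemma psiA_eqOn_fiber (a : ℝ) (f : Ω → ℝ) :
    Set.EqOn (psiA P X Z a f)
      (fun ω => (condProbOn P {ω | Z ω = a} {ω | X ω = x})⁻¹
          * {ω | Z ω = a}.indicator (fun ω => f ω - condMeanOn P {ω | Z ω = a ∧ X ω = x} f) ω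
        + condMeanOn P {ω | Z ω = a ∧ X ω = x} f)
      {ω | X ω = x} := by
  intro ω (hω : X ω = x)
  by_cases hZ : Z ω = a <;> simp [psiA, hω, hZ, div_eq_inv_mul]

variable [IsFiniteMeasure P]

lemma integrableOn_psiA (hZ : Measurable Z) (hD : MeasurableSet {ω | X ω = x}) (a : ℝ)
    {f : Ω → ℝ} (hf : IntegrableOn f {ω | X ω = x} P) :
    IntegrableOn (psiA P X Z a f) {ω | X ω = x} P := by
  refine IntegrableOn.congr_fun ?_ (psiA_eqOn_fiber a f).symm hD
  exact (((hf.sub (integrableOn_const (measure_ne_top _ _))).indicator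
    (hZ (measurableSet_singleton a))).const_mul _).add (integrableOn_const (measure_ne_top _ _))

lemma condMeanOn_psiA (hZ : Measurable Z) (hD : MeasurableSet {ω | X ω = x}) (a : ℝ)
    {f : Ω → ℝ} (hf : IntegrableOn f {ω | X ω = x} P) (hC : P {ω | Z ω = a ∧ X ω = x} ≠ 0) :
    condMeanOn P {ω | X ω = x} (psiA P X Z a f) = condMeanOn P {ω | Z ω = a ∧ X ω = x} f := by
  set m := condMeanOn P {ω | Z ω = a ∧ X ω = x} f
  have hZa : MeasurableSet {ω | Z ω = a} := hZ (measurableSet_singleton a)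
  have hDZ : {ω | X ω = x} ∩ {ω | Z ω = a} = {ω | Z ω = a ∧ X ω = x} := by
    ext ω; exact and_comm
  have hD0 : P {ω | X ω = x} ≠ 0 := fun h => hC (measure_mono_null (fun ω hω => hω.2) h)
  have hconst : ∀ A : Set Ω, IntegrableOn (fun _ => m) A P :=
    fun A => integrableOn_const (measure_ne_top _ _)
  have hind : IntegrableOn ({ω | Z ω = a}.indicator fun ω => f ω - m) {ω | X ω = x} P :=
    (hf.sub (hconst _)).indicator hZa
  rw [condMeanOn_congr_fun hD (psiA_eqOn_fiber a f),
    condMeanOn_add (hind.const_mul _) (hconst _), condMeanOn_const_mul,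
    condMeanOn_indicator hZa, hDZ, condMeanOn_sub (hf.mono_set fun ω hω => hω.2) (hconst _),
    condMeanOn_const hC, condMeanOn_const hD0, sub_self, zero_mul, mul_zero, zero_add]

end AugmentedScore

section Binary

variable {Ω : Type*} {S : Ω → ℝ}

lemma binary_eq_indicator (hS : ∀ ω, S ω = 0 ∨ S ω = 1) : S = {ω | S ω = 1}.indicator 1 := by
  funext ω; rcases hS ω with h | h <;> simp [h]

lemma one_sub_binary_eq_indicator (hS : ∀ ω, S ω = 0 ∨ S ω = 1) :
    (fun ω => 1 - S ω) = {ω | S ω = 0}.indicator 1 := by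
  funext ω; rcases hS ω with h | h <;> simp [h]

lemma mul_binary_eq_indicator (hS : ∀ ω, S ω = 0 ∨ S ω = 1) (Y : Ω → ℝ) :
    (fun ω => Y ω * S ω) = {ω | S ω = 1}.indicator Y := by
  funext ω; rcases hS ω with h | h <;> simp [h]

lemma mul_one_sub_binary_eq_indicator (hS : ∀ ω, S ω = 0 ∨ S ω = 1) (Y : Ω → ℝ) :
    (fun ω => Y ω * (1 - S ω)) = {ω | S ω = 0}.indicator Y := by
  funext ω; rcases hS ω with h | h <;> simp [h]

end Binary

section Cells

variable {Ω 𝓧 : Type*} [MeasurableSpace Ω] {P : Measure Ω} [IsFiniteMeasure P] {X : Ω → 𝓧}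
  {Z S Y : Ω → ℝ} {x : 𝓧}

lemma condMeanOn_indicator_cell (hS : Measurable S) (z s : ℝ) :
    condMeanOn P {ω | Z ω = z ∧ X ω = x} ({ω | S ω = s}.indicator Y)
      = muZS P X Z S Y z s x * condProbOn P {ω | S ω = s} {ω | Z ω = z ∧ X ω = x} := by
  rw [condMeanOn_indicator (measurableSet_eq_fun hS measurable_const), muZS]
  congr 2
  ext ω
  simp only [Set.mem_inter_iff, Set.mem_ofPred_eq]
  tauto

lemma condProbOn_zero_eq_one_sub_pZs (hS : Measurable S) (hS01 : ∀ ω, S ω = 0 ∨ S ω = 1)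
    (z : ℝ) (hC : P {ω | Z ω = z ∧ X ω = x} ≠ 0) :
    condProbOn P {ω | S ω = 0} {ω | Z ω = z ∧ X ω = x} = 1 - pZs P X Z S z x := by
  set C := {ω | Z ω = z ∧ X ω = x}
  have hsplit := measure_inter_add_sdiff (μ := P) C
    (measurableSet_eq_fun hS (measurable_const (a := (1 : ℝ))))
  have hdiff : C \ {ω | S ω = 1} = {ω | S ω = 0} ∩ C := by
    ext ω
    rcases hS01 ω with h | h <;> simp [h, and_comm]
  rw [hdiff, ← ENNReal.toReal_eq_toReal_iff' (by finiteness) (measure_ne_top P C),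
    ENNReal.toReal_add (measure_ne_top P _) (measure_ne_top P _), Set.inter_comm] at hsplit
  have hC' : (P C).toReal ≠ 0 := ENNReal.toReal_ne_zero.2 ⟨hC, measure_ne_top P C⟩
  rw [pZs, condProbOn, condProbOn, eq_sub_iff_add_eq, ← add_div, add_comm, hsplit, div_self hC']

end Cells

section Scores

variable {Ω 𝓧 : Type*} [MeasurableSpace Ω] {P : Measure Ω} {X : Ω → 𝓧} {Z S Y : Ω → ℝ}
  {x : 𝓧}

lemma integrableOn_mul_binary {A : Set Ω} (hY : IntegrableOn Y A P) (hS : Measurable S)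
    (hS01 : ∀ ω, S ω = 0 ∨ S ω = 1) : IntegrableOn (fun ω => Y ω * S ω) A P := by
  rw [mul_binary_eq_indicator hS01]
  exact hY.indicator (measurableSet_eq_fun hS measurable_const)

lemma integrableOn_mul_one_sub_binary {A : Set Ω} (hY : IntegrableOn Y A P)
    (hS : Measurable S) (hS01 : ∀ ω, S ω = 0 ∨ S ω = 1) :
    IntegrableOn (fun ω => Y ω * (1 - S ω)) A P := by
  rw [mul_one_sub_binary_eq_indicator hS01]
  exact hY.indicator (measurableSet_eq_fun hS measurable_const)

variable [IsFiniteMeasure P]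

lemma integrableOn_binary (hS : Measurable S) (hS01 : ∀ ω, S ω = 0 ∨ S ω = 1) (A : Set Ω) :
    IntegrableOn S A P := by
  rw [binary_eq_indicator hS01]
  exact integrableOn_indicator_one (measurableSet_eq_fun hS measurable_const)

lemma integrableOn_one_sub_binary (hS : Measurable S) (hS01 : ∀ ω, S ω = 0 ∨ S ω = 1)
    (A : Set Ω) : IntegrableOn (fun ω => 1 - S ω) A P := by
  rw [one_sub_binary_eq_indicator hS01]
  exact integrableOn_indicator_one (measurableSet_eq_fun hS measurable_const)

lemma condMeanOn_psiA_binary (hZ : Measurable Z) (hD : MeasurableSet {ω | X ω = x})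
    (hS : Measurable S) (hS01 : ∀ ω, S ω = 0 ∨ S ω = 1) (a : ℝ)
    (hC : P {ω | Z ω = a ∧ X ω = x} ≠ 0) :
    condMeanOn P {ω | X ω = x} (psiA P X Z a S) = pZs P X Z S a x := by
  rw [condMeanOn_psiA hZ hD a (integrableOn_binary hS hS01 _) hC]
  conv_lhs => rw [binary_eq_indicator hS01]
  rw [condMeanOn_indicator_one (measurableSet_eq_fun hS measurable_const), pZs]

lemma condMeanOn_psiA_one_sub_binary (hZ : Measurable Z) (hD : MeasurableSet {ω | X ω = x})
    (hS : Measurable S) (hS01 : ∀ ω, S ω = 0 ∨ S ω = 1) (a : ℝ)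
    (hC : P {ω | Z ω = a ∧ X ω = x} ≠ 0) :
    condMeanOn P {ω | X ω = x} (psiA P X Z a fun ω => 1 - S ω) = 1 - pZs P X Z S a x := by
  rw [condMeanOn_psiA hZ hD a (integrableOn_one_sub_binary hS hS01 _) hC,
    one_sub_binary_eq_indicator hS01,
    condMeanOn_indicator_one (measurableSet_eq_fun hS measurable_const),
    condProbOn_zero_eq_one_sub_pZs hS hS01 a hC]

lemma condMeanOn_psiA_mul_binary (hZ : Measurable Z) (hD : MeasurableSet {ω | X ω = x})
    (hS : Measurable S) (hS01 : ∀ ω, S ω = 0 ∨ S ω = 1) (hY : IntegrableOn Y {ω | X ω = x} P)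
    (a : ℝ) (hC : P {ω | Z ω = a ∧ X ω = x} ≠ 0) :
    condMeanOn P {ω | X ω = x} (psiA P X Z a fun ω => Y ω * S ω)
      = muZS P X Z S Y a 1 x * pZs P X Z S a x := by
  rw [condMeanOn_psiA hZ hD a (integrableOn_mul_binary hY hS hS01) hC,
    mul_binary_eq_indicator hS01, condMeanOn_indicator_cell hS, pZs]

lemma condMeanOn_psiA_mul_one_sub_binary (hZ : Measurable Z)
    (hD : MeasurableSet {ω | X ω = x}) (hS : Measurable S) (hS01 : ∀ ω, S ω = 0 ∨ S ω = 1)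
    (hY : IntegrableOn Y {ω | X ω = x} P) (a : ℝ) (hC : P {ω | Z ω = a ∧ X ω = x} ≠ 0) :
    condMeanOn P {ω | X ω = x} (psiA P X Z a fun ω => Y ω * (1 - S ω))
      = muZS P X Z S Y a 0 x * (1 - pZs P X Z S a x) := by
  rw [condMeanOn_psiA hZ hD a (integrableOn_mul_one_sub_binary hY hS hS01) hC,
    mul_one_sub_binary_eq_indicator hS01, condMeanOn_indicator_cell hS,
    condProbOn_zero_eq_one_sub_pZs hS hS01 a hC]

lemma condMeanOn_gA10 (hZ : Measurable Z) (hD : MeasurableSet {ω | X ω = x})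
    (hS : Measurable S) (hS01 : ∀ ω, S ω = 0 ∨ S ω = 1) (hC0 : P {ω | Z ω = 0 ∧ X ω = x} ≠ 0)
    (hC1 : P {ω | Z ω = 1 ∧ X ω = x} ≠ 0) :
    condMeanOn P {ω | X ω = x} (gA10 P X Z S) = pZs P X Z S 1 x - pZs P X Z S 0 x := by
  unfold gA10
  rw [condMeanOn_sub (integrableOn_psiA hZ hD 1 (integrableOn_binary hS hS01 _))
      (integrableOn_psiA hZ hD 0 (integrableOn_binary hS hS01 _)),
    condMeanOn_psiA_binary hZ hD hS hS01 1 hC1, condMeanOn_psiA_binary hZ hD hS hS01 0 hC0]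

end Scores

section Numerators

variable {Ω 𝓧 : Type*} [MeasurableSpace Ω] {P : Measure Ω} [IsFiniteMeasure P] {X : Ω → 𝓧}
  {Z S Y : Ω → ℝ} {x : 𝓧}

-- On the fiber `{X = x}` the nuisance coefficients of the `φ`'s are constants, so their means
-- are the same combinations of the score means.
lemma condMeanOn_phiA_10_sub (hZ : Measurable Z) (hD : MeasurableSet {ω | X ω = x})
    (hS : Measurable S) (hS01 : ∀ ω, S ω = 0 ∨ S ω = 1) (hY : IntegrableOn Y {ω | X ω = x} P)
    (hC0 : P {ω | Z ω = 0 ∧ X ω = x} ≠ 0) (hC1 : P {ω | Z ω = 1 ∧ X ω = x} ≠ 0)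
    (hp1 : pZs P X Z S 1 x ≠ 0) (hp0 : 1 - pZs P X Z S 0 x ≠ 0) :
    condMeanOn P {ω | X ω = x} (fun ω => phiA1_10 P X Z S Y ω - phiA0_10 P X Z S Y ω)
      = (pZs P X Z S 1 x - pZs P X Z S 0 x)
        * (muZS P X Z S Y 1 1 x - muZS P X Z S Y 0 0 x) := by
  set p1 := pZs P X Z S 1 x
  set p0 := pZs P X Z S 0 x
  set μ11 := muZS P X Z S Y 1 1 x
  set μ00 := muZS P X Z S Y 0 0 x
  set ψ := psiA P X Z
  have hψ : ∀ a f, IntegrableOn f {ω | X ω = x} P → IntegrableOn (ψ a f) {ω | X ω = x} P :=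
    fun a _ hf => integrableOn_psiA hZ hD a hf
  rw [condMeanOn_congr_fun hD (g := fun ω =>
      ((p1 - p0) / p1 * ψ 1 (fun ω => Y ω * S ω) ω
        - μ11 * (ψ 0 S ω - p0 / p1 * ψ 1 S ω))
      - ((p1 - p0) / (1 - p0) * ψ 0 (fun ω => Y ω * (1 - S ω)) ω
        - μ00 * (ψ 1 (fun ω => 1 - S ω) ω
          - (1 - p1) / (1 - p0) * ψ 0 (fun ω => 1 - S ω) ω)))
      fun ω (hω : X ω = x) => by simp only [phiA1_10, phiA0_10, hω]; rfl]
  have hYS := integrableOn_mul_binary hY hS hS01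
  have hYmS := integrableOn_mul_one_sub_binary hY hS hS01
  have hS' := integrableOn_binary (P := P) hS hS01 {ω | X ω = x}
  have hmS := integrableOn_one_sub_binary (P := P) hS hS01 {ω | X ω = x}
  repeat first
    | rw [condMeanOn_const_mul]
    | rw [condMeanOn_sub (by apply_rules [Integrable.sub, Integrable.add, Integrable.const_mul, hψ])
        (by apply_rules [Integrable.sub, Integrable.add, Integrable.const_mul, hψ])]
  rw [condMeanOn_psiA_mul_binary hZ hD hS hS01 hY 1 hC1,
    condMeanOn_psiA_binary hZ hD hS hS01 0 hC0, condMeanOn_psiA_binary hZ hD hS hS01 1 hC1,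
    condMeanOn_psiA_mul_one_sub_binary hZ hD hS hS01 hY 0 hC0,
    condMeanOn_psiA_one_sub_binary hZ hD hS hS01 1 hC1,
    condMeanOn_psiA_one_sub_binary hZ hD hS hS01 0 hC0]
  field_simp
  ring

lemma condMeanOn_phiA_11_sub (hZ : Measurable Z) (hD : MeasurableSet {ω | X ω = x})
    (hS : Measurable S) (hS01 : ∀ ω, S ω = 0 ∨ S ω = 1) (hY : IntegrableOn Y {ω | X ω = x} P)
    (hC0 : P {ω | Z ω = 0 ∧ X ω = x} ≠ 0) (hC1 : P {ω | Z ω = 1 ∧ X ω = x} ≠ 0)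
    (hp1 : pZs P X Z S 1 x ≠ 0) :
    condMeanOn P {ω | X ω = x} (fun ω => phiA1_11 P X Z S Y ω - phiA0_11 P X Z S Y ω)
      = pZs P X Z S 0 x * (muZS P X Z S Y 1 1 x - muZS P X Z S Y 0 1 x) := by
  set p1 := pZs P X Z S 1 x
  set p0 := pZs P X Z S 0 x
  set μ11 := muZS P X Z S Y 1 1 x
  set ψ := psiA P X Z
  have hψ : ∀ a f, IntegrableOn f {ω | X ω = x} P → IntegrableOn (ψ a f) {ω | X ω = x} P :=
    fun a _ hf => integrableOn_psiA hZ hD a hf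
  rw [condMeanOn_congr_fun hD (g := fun ω =>
      (p0 / p1 * ψ 1 (fun ω => Y ω * S ω) ω + μ11 * (ψ 0 S ω - p0 / p1 * ψ 1 S ω))
        - ψ 0 (fun ω => Y ω * S ω) ω)
      fun ω (hω : X ω = x) => by simp only [phiA1_11, phiA0_11, hω]; rfl]
  have hYS := integrableOn_mul_binary hY hS hS01
  have hS' := integrableOn_binary (P := P) hS hS01 {ω | X ω = x}
  repeat first
    | rw [condMeanOn_const_mul]
    | rw [condMeanOn_sub (by apply_rules [Integrable.sub, Integrable.add, Integrable.const_mul, hψ])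
        (by apply_rules [Integrable.sub, Integrable.add, Integrable.const_mul, hψ])]
    | rw [condMeanOn_add (by apply_rules [Integrable.sub, Integrable.add, Integrable.const_mul, hψ])
        (by apply_rules [Integrable.sub, Integrable.add, Integrable.const_mul, hψ])]
  rw [condMeanOn_psiA_mul_binary hZ hD hS hS01 hY 1 hC1,
    condMeanOn_psiA_binary hZ hD hS hS01 0 hC0, condMeanOn_psiA_binary hZ hD hS hS01 1 hC1,
    condMeanOn_psiA_mul_binary hZ hD hS hS01 hY 0 hC0]
  field_simp
  ring

lemma condMeanOn_phiA_00_sub (hZ : Measurable Z) (hD : MeasurableSet {ω | X ω = x})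
    (hS : Measurable S) (hS01 : ∀ ω, S ω = 0 ∨ S ω = 1) (hY : IntegrableOn Y {ω | X ω = x} P)
    (hC0 : P {ω | Z ω = 0 ∧ X ω = x} ≠ 0) (hC1 : P {ω | Z ω = 1 ∧ X ω = x} ≠ 0)
    (hp0 : 1 - pZs P X Z S 0 x ≠ 0) :
    condMeanOn P {ω | X ω = x} (fun ω => phiA1_00 P X Z S Y ω - phiA0_00 P X Z S Y ω)
      = (1 - pZs P X Z S 1 x) * (muZS P X Z S Y 1 0 x - muZS P X Z S Y 0 0 x) := by
  set p1 := pZs P X Z S 1 x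
  set p0 := pZs P X Z S 0 x
  set μ00 := muZS P X Z S Y 0 0 x
  set ψ := psiA P X Z
  have hψ : ∀ a f, IntegrableOn f {ω | X ω = x} P → IntegrableOn (ψ a f) {ω | X ω = x} P :=
    fun a _ hf => integrableOn_psiA hZ hD a hf
  rw [condMeanOn_congr_fun hD (g := fun ω =>
      ψ 1 (fun ω => Y ω * (1 - S ω)) ω
        - ((1 - p1) / (1 - p0) * ψ 0 (fun ω => Y ω * (1 - S ω)) ω
          + μ00 * (ψ 1 (fun ω => 1 - S ω) ω
            - (1 - p1) / (1 - p0) * ψ 0 (fun ω => 1 - S ω) ω)))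
      fun ω (hω : X ω = x) => by simp only [phiA1_00, phiA0_00, hω]; rfl]
  have hYmS := integrableOn_mul_one_sub_binary hY hS hS01
  have hmS := integrableOn_one_sub_binary (P := P) hS hS01 {ω | X ω = x}
  repeat first
    | rw [condMeanOn_const_mul]
    | rw [condMeanOn_sub (by apply_rules [Integrable.sub, Integrable.add, Integrable.const_mul, hψ])
        (by apply_rules [Integrable.sub, Integrable.add, Integrable.const_mul, hψ])]
    | rw [condMeanOn_add (by apply_rules [Integrable.sub, Integrable.add, Integrable.const_mul, hψ])
        (by apply_rules [Integrable.sub, Integrable.add, Integrable.const_mul, hψ])]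
  rw [condMeanOn_psiA_mul_one_sub_binary hZ hD hS hS01 hY 1 hC1,
    condMeanOn_psiA_mul_one_sub_binary hZ hD hS hS01 hY 0 hC0,
    condMeanOn_psiA_one_sub_binary hZ hD hS hS01 1 hC1,
    condMeanOn_psiA_one_sub_binary hZ hD hS hS01 0 hC0]
  field_simp
  ring

end Numerators

section PotentialOutcomes

variable {Ω 𝓧 β : Type*} [MeasurableSpace Ω] [MeasurableSpace β] {P : Measure Ω}
  [IsFiniteMeasure P] {X : Ω → 𝓧} {Z S Y : Ω → ℝ} {x : 𝓧}

lemma muZS_eq_condMeanOn_potential {V : Ω → β} (hV : Measurable V) {z : ℝ} (gY gS : β → ℝ)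
    (hgY : Measurable gY) (hgS : Measurable gS)
    (hcons : ∀ ω, Z ω = z → Y ω = gY (V ω) ∧ S ω = gS (V ω))
    (hCD : ∀ A, MeasurableSet A →
      P (V ⁻¹' A ∩ {ω | Z ω = z ∧ X ω = x}) * P {ω | X ω = x}
        = P (V ⁻¹' A ∩ {ω | X ω = x}) * P {ω | Z ω = z ∧ X ω = x})
    (hCm : MeasurableSet {ω | Z ω = z ∧ X ω = x}) (hC : P {ω | Z ω = z ∧ X ω = x} ≠ 0) (s : ℝ)
    (hY : IntegrableOn Y {ω | Z ω = z ∧ S ω = s ∧ X ω = x} P) :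
    IntegrableOn (fun ω => gY (V ω)) {ω | gS (V ω) = s ∧ X ω = x} P ∧
      condMeanOn P {ω | gS (V ω) = s ∧ X ω = x} (fun ω => gY (V ω)) = muZS P X Z S Y z s x := by
  have hD : P {ω | X ω = x} ≠ 0 := fun h => hC (measure_mono_null (fun ω hω => hω.2) h)
  have hB : MeasurableSet (gS ⁻¹' {s}) := hgS (measurableSet_singleton s)
  have hcell : {ω | Z ω = z ∧ S ω = s ∧ X ω = x}
      = V ⁻¹' (gS ⁻¹' {s}) ∩ {ω | Z ω = z ∧ X ω = x} := by
    ext ω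
    simp only [Set.mem_ofPred_eq, Set.mem_inter_iff, Set.mem_preimage, Set.mem_singleton_iff]
    constructor
    · rintro ⟨hz, hs, hx⟩; exact ⟨(hcons ω hz).2 ▸ hs, hz, hx⟩
    · rintro ⟨hs, hz, hx⟩; exact ⟨hz, (hcons ω hz).2 ▸ hs, hx⟩
  have hYeq : Set.EqOn Y (fun ω => gY (V ω)) (V ⁻¹' (gS ⁻¹' {s}) ∩ {ω | Z ω = z ∧ X ω = x}) :=
    fun ω hω => (hcons ω hω.2.1).1
  have hmeas : MeasurableSet (V ⁻¹' (gS ⁻¹' {s}) ∩ {ω | Z ω = z ∧ X ω = x}) :=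
    (hV hB).inter hCm
  rw [hcell] at hY
  refine ⟨(integrableOn_comp_iff_of_proportional hV hCD hC hD hB hgY).1
    (hY.congr_fun hYeq hmeas), ?_⟩
  rw [muZS, hcell, condMeanOn_congr_fun hmeas hYeq,
    condMeanOn_comp_eq_of_proportional hV hCD hC hD hB hgY]
  rfl

end PotentialOutcomes

section PrincipalStrata

variable {Ω 𝓧 : Type*} {X : Ω → 𝓧} {x : 𝓧} {S1 S0 Y1 Y0 : Ω → ℝ}

lemma setOf_S1_one_eq_union_strata (hS0 : ∀ ω, S0 ω = 0 ∨ S0 ω = 1) :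
    {ω | S1 ω = 1 ∧ X ω = x}
      = {ω | S1 ω = 1 ∧ S0 ω = 1 ∧ X ω = x} ∪ {ω | S1 ω = 1 ∧ S0 ω = 0 ∧ X ω = x} := by
  ext ω
  rcases hS0 ω with h | h <;> simp [h]

lemma setOf_S0_zero_eq_union_strata (hS1 : ∀ ω, S1 ω = 0 ∨ S1 ω = 1) :
    {ω | S0 ω = 0 ∧ X ω = x}
      = {ω | S1 ω = 1 ∧ S0 ω = 0 ∧ X ω = x} ∪ {ω | S1 ω = 0 ∧ S0 ω = 0 ∧ X ω = x} := by
  ext ω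
  rcases hS1 ω with h | h <;> simp [h]

variable [MeasurableSpace Ω] {P : Measure Ω}

lemma setOf_S0_one_ae_eq_stratum (hS1 : ∀ ω, S1 ω = 0 ∨ S1 ω = 1)
    (hmono : ∀ᵐ ω ∂P, S0 ω ≤ S1 ω) :
    {ω | S0 ω = 1 ∧ X ω = x} =ᵐ[P] {ω | S1 ω = 1 ∧ S0 ω = 1 ∧ X ω = x} := by
  filter_upwards [hmono] with ω hω
  change (_ ∧ _) = (_ ∧ _ ∧ _)
  rcases hS1 ω with h | h
  · have h0 : S0 ω ≠ 1 := by linarith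
    simp [h, h0]
  · simp [h]

lemma setOf_S1_zero_ae_eq_stratum (hS0 : ∀ ω, S0 ω = 0 ∨ S0 ω = 1)
    (hmono : ∀ᵐ ω ∂P, S0 ω ≤ S1 ω) :
    {ω | S1 ω = 0 ∧ X ω = x} =ᵐ[P] {ω | S1 ω = 0 ∧ S0 ω = 0 ∧ X ω = x} := by
  filter_upwards [hmono] with ω hω
  change (_ ∧ _) = (_ ∧ _ ∧ _)
  rcases hS0 ω with h | h
  · simp [h]
  · have h1 : S1 ω ≠ 0 := by linarith
    simp [h, h1]

lemma tauPO_eq_of_arm_means [IsFiniteMeasure P] (hD : MeasurableSet {ω | X ω = x})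
    (hS1m : Measurable S1) (hS0m : Measurable S0) (hS1 : ∀ ω, S1 ω = 0 ∨ S1 ω = 1)
    (hS0 : ∀ ω, S0 ω = 0 ∨ S0 ω = 1) (hmono : ∀ᵐ ω ∂P, S0 ω ≤ S1 ω)
    (hPI : condMeanOn P {ω | S1 ω = 1 ∧ S0 ω = 1 ∧ X ω = x} Y1
          = condMeanOn P {ω | S1 ω = 1 ∧ S0 ω = 0 ∧ X ω = x} Y1 ∧
        condMeanOn P {ω | S1 ω = 0 ∧ S0 ω = 0 ∧ X ω = x} Y0
          = condMeanOn P {ω | S1 ω = 1 ∧ S0 ω = 0 ∧ X ω = x} Y0)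
    {m11 m10 m01 m00 : ℝ}
    (h11 : IntegrableOn Y1 {ω | S1 ω = 1 ∧ X ω = x} P ∧
      condMeanOn P {ω | S1 ω = 1 ∧ X ω = x} Y1 = m11)
    (h10 : IntegrableOn Y1 {ω | S1 ω = 0 ∧ X ω = x} P ∧
      condMeanOn P {ω | S1 ω = 0 ∧ X ω = x} Y1 = m10)
    (h01 : IntegrableOn Y0 {ω | S0 ω = 1 ∧ X ω = x} P ∧
      condMeanOn P {ω | S0 ω = 1 ∧ X ω = x} Y0 = m01)
    (h00 : IntegrableOn Y0 {ω | S0 ω = 0 ∧ X ω = x} P ∧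
      condMeanOn P {ω | S0 ω = 0 ∧ X ω = x} Y0 = m00) :
    tauPO P X S1 S0 Y1 Y0 0 0 x = m10 - m00 ∧ tauPO P X S1 S0 Y1 Y0 1 0 x = m11 - m00 ∧
      tauPO P X S1 S0 Y1 Y0 1 1 x = m11 - m01 := by
  have hstratum : ∀ a b : ℝ, MeasurableSet {ω | S1 ω = a ∧ S0 ω = b ∧ X ω = x} := fun a b =>
    (measurableSet_eq_fun hS1m measurable_const).inter
      ((measurableSet_eq_fun hS0m measurable_const).inter hD)
  have hdisj : ∀ a b c d : ℝ, (a ≠ c ∨ b ≠ d) → Disjoint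
      {ω | S1 ω = a ∧ S0 ω = b ∧ X ω = x} {ω | S1 ω = c ∧ S0 ω = d ∧ X ω = x} := by
    rintro a b c d hne
    refine Set.disjoint_left.2 fun ω h h' => ?_
    rcases hne with hne | hne
    · exact hne (h.1.symm.trans h'.1)
    · exact hne (h.2.1.symm.trans h'.2.1)
  obtain ⟨hY1_1, hm11⟩ := h11
  obtain ⟨hY0_0, hm00⟩ := h00
  rw [setOf_S1_one_eq_union_strata hS0] at hY1_1 hm11
  rw [setOf_S0_zero_eq_union_strata hS1] at hY0_0 hm00
  rw [condMeanOn_union_of_eq (hstratum 1 0) (hdisj 1 1 1 0 (by norm_num))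
    (hY1_1.mono_set Set.subset_union_left) (hY1_1.mono_set Set.subset_union_right) hPI.1] at hm11
  rw [condMeanOn_union_of_eq (hstratum 0 0) (hdisj 1 0 0 0 (by norm_num))
    (hY0_0.mono_set Set.subset_union_left) (hY0_0.mono_set Set.subset_union_right)
    hPI.2.symm] at hm00
  have hae0 := setOf_S1_zero_ae_eq_stratum (P := P) (X := X) (x := x) hS0 hmono
  have hae1 := setOf_S0_one_ae_eq_stratum (P := P) (X := X) (x := x) hS1 hmono
  refine ⟨?_, ?_, ?_⟩
  · rw [tauPO, condMeanOn_sub (h10.1.congr_set_ae hae0.symm)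
      (hY0_0.mono_set Set.subset_union_right), ← condMeanOn_congr_set hae0, h10.2, hPI.2, hm00]
  · rw [tauPO, condMeanOn_sub (hY1_1.mono_set Set.subset_union_right)
      (hY0_0.mono_set Set.subset_union_left), ← hPI.1, hm11, hm00]
  · rw [tauPO, condMeanOn_sub (hY1_1.mono_set Set.subset_union_left)
      (h01.1.congr_set_ae hae1.symm), hm11, ← condMeanOn_congr_set hae1, h01.2]

end PrincipalStrata

lemma tauPO_eq_muZS_sub {Ω 𝓧 : Type*} [MeasurableSpace Ω] {P : Measure Ω} [IsFiniteMeasure P]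
    {X : Ω → 𝓧} {x : 𝓧} {Y Z S Y1 Y0 S1 S0 : Ω → ℝ} (hD : MeasurableSet {ω | X ω = x})
    (hZ : Measurable Z) (hY1m : Measurable Y1) (hY0m : Measurable Y0)
    (hS1m : Measurable S1) (hS0m : Measurable S0) (hS1 : ∀ ω, S1 ω = 0 ∨ S1 ω = 1)
    (hS0 : ∀ ω, S0 ω = 0 ∨ S0 ω = 1)
    (hA1 : ∀ ω, Y ω = Y1 ω * Z ω + Y0 ω * (1 - Z ω) ∧ S ω = S1 ω * Z ω + S0 ω * (1 - Z ω))
    (hA2 : ∀ A : Set (ℝ × ℝ × ℝ × ℝ), MeasurableSet A → ∀ z : ℝ,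
      P ({ω | (Y1 ω, Y0 ω, S1 ω, S0 ω) ∈ A} ∩ {ω | Z ω = z} ∩ {ω | X ω = x})
          * P {ω | X ω = x}
        = P ({ω | (Y1 ω, Y0 ω, S1 ω, S0 ω) ∈ A} ∩ {ω | X ω = x})
            * P ({ω | Z ω = z} ∩ {ω | X ω = x}))
    (hA3 : ∀ᵐ ω ∂P, S0 ω ≤ S1 ω)
    (hA4 : condMeanOn P {ω | S1 ω = 1 ∧ S0 ω = 1 ∧ X ω = x} Y1
          = condMeanOn P {ω | S1 ω = 1 ∧ S0 ω = 0 ∧ X ω = x} Y1 ∧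
        condMeanOn P {ω | S1 ω = 0 ∧ S0 ω = 0 ∧ X ω = x} Y0
          = condMeanOn P {ω | S1 ω = 1 ∧ S0 ω = 0 ∧ X ω = x} Y0)
    (hC0 : P {ω | Z ω = 0 ∧ X ω = x} ≠ 0) (hC1 : P {ω | Z ω = 1 ∧ X ω = x} ≠ 0)
    (hY : IntegrableOn Y {ω | X ω = x} P) :
    tauPO P X S1 S0 Y1 Y0 0 0 x = muZS P X Z S Y 1 0 x - muZS P X Z S Y 0 0 x ∧
      tauPO P X S1 S0 Y1 Y0 1 0 x = muZS P X Z S Y 1 1 x - muZS P X Z S Y 0 0 x ∧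
      tauPO P X S1 S0 Y1 Y0 1 1 x = muZS P X Z S Y 1 1 x - muZS P X Z S Y 0 1 x := by
  have hV : Measurable fun ω => (Y1 ω, Y0 ω, S1 ω, S0 ω) :=
    hY1m.prodMk (hY0m.prodMk (hS1m.prodMk hS0m))
  have hC : ∀ z : ℝ, MeasurableSet {ω | Z ω = z ∧ X ω = x} := fun z =>
    (measurableSet_eq_fun hZ measurable_const).inter hD
  have hCD : ∀ z : ℝ, ∀ A, MeasurableSet A →
      P ((fun ω => (Y1 ω, Y0 ω, S1 ω, S0 ω)) ⁻¹' A ∩ {ω | Z ω = z ∧ X ω = x}) * P {ω | X ω = x}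
        = P ((fun ω => (Y1 ω, Y0 ω, S1 ω, S0 ω)) ⁻¹' A ∩ {ω | X ω = x})
          * P {ω | Z ω = z ∧ X ω = x} := fun z A hA => by
    have h := hA2 A hA z
    rw [Set.inter_assoc] at h
    exact h
  have hcons1 : ∀ ω, Z ω = 1 → Y ω = Y1 ω ∧ S ω = S1 ω := fun ω hz => by simpa [hz] using hA1 ω
  have hcons0 : ∀ ω, Z ω = 0 → Y ω = Y0 ω ∧ S ω = S0 ω := fun ω hz => by simpa [hz] using hA1 ω
  have hYcell : ∀ z s : ℝ, IntegrableOn Y {ω | Z ω = z ∧ S ω = s ∧ X ω = x} P :=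
    fun z s => hY.mono_set fun ω hω => hω.2.2
  exact tauPO_eq_of_arm_means hD hS1m hS0m hS1 hS0 hA3 hA4
    (muZS_eq_condMeanOn_potential hV (fun v => v.1) (fun v => v.2.2.1) (by fun_prop) (by fun_prop)
      hcons1 (hCD 1) (hC 1) hC1 1 (hYcell 1 1))
    (muZS_eq_condMeanOn_potential hV (fun v => v.1) (fun v => v.2.2.1) (by fun_prop) (by fun_prop)
      hcons1 (hCD 1) (hC 1) hC1 0 (hYcell 1 0))
    (muZS_eq_condMeanOn_potential hV (fun v => v.2.1) (fun v => v.2.2.2) (by fun_prop)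
      (by fun_prop) hcons0 (hCD 0) (hC 0) hC0 1 (hYcell 0 1))
    (muZS_eq_condMeanOn_potential hV (fun v => v.2.1) (fun v => v.2.2.2) (by fun_prop)
      (by fun_prop) hcons0 (hCD 0) (hC 0) hC0 0 (hYcell 0 0))

theorem cpce_eif_identification_general
    {Ω : Type*} [MeasurableSpace Ω] (P : Measure Ω) [IsProbabilityMeasure P]
    {d : ℕ} (X : Ω → Fin d → ℝ) (Y Z S Y1 Y0 S1 S0 : Ω → ℝ)
    (hXm : Measurable X) (hZm : Measurable Z) (hSm : Measurable S)
    (hY1m : Measurable Y1) (hY0m : Measurable Y0) (hS1m : Measurable S1) (hS0m : Measurable S0)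
    (hS01 : ∀ ω, S ω = 0 ∨ S ω = 1)
    (hS1b : ∀ ω, S1 ω = 0 ∨ S1 ω = 1) (hS0b : ∀ ω, S0 ω = 0 ∨ S0 ω = 1)
    -- Assumption 1 (consistency)
    (hA1 : ∀ ω, Y ω = Y1 ω * Z ω + Y0 ω * (1 - Z ω) ∧ S ω = S1 ω * Z ω + S0 ω * (1 - Z ω))
    -- Assumption 2 (treatment ignorability): (Y(1),Y(0),S(1),S(0)) ⟂ Z | X
    (hA2 : ∀ (x : Fin d → ℝ) (A : Set (ℝ × ℝ × ℝ × ℝ)), MeasurableSet A → ∀ z : ℝ,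
      P ({ω | (Y1 ω, Y0 ω, S1 ω, S0 ω) ∈ A} ∩ {ω | Z ω = z} ∩ {ω | X ω = x})
          * P {ω | X ω = x}
        = P ({ω | (Y1 ω, Y0 ω, S1 ω, S0 ω) ∈ A} ∩ {ω | X ω = x})
            * P ({ω | Z ω = z} ∩ {ω | X ω = x}))
    -- Assumption 3 (monotonicity)
    (hA3 : ∀ᵐ ω ∂P, S0 ω ≤ S1 ω)
    -- Assumption 4 (principal ignorability)
    (hA4 : ∀ x : Fin d → ℝ, P {ω | X ω = x} ≠ 0 →
      condMeanOn P {ω | S1 ω = 1 ∧ S0 ω = 1 ∧ X ω = x} Y1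
          = condMeanOn P {ω | S1 ω = 1 ∧ S0 ω = 0 ∧ X ω = x} Y1 ∧
        condMeanOn P {ω | S1 ω = 0 ∧ S0 ω = 0 ∧ X ω = x} Y0
          = condMeanOn P {ω | S1 ω = 1 ∧ S0 ω = 0 ∧ X ω = x} Y0)
    (hYi : Integrable Y P) :
    ∀ x : Fin d → ℝ,
      P {ω | X ω = x} ≠ 0 →
      (∀ z : ℝ, z = 0 ∨ z = 1 → P {ω | Z ω = z ∧ X ω = x} ≠ 0) →
      (∀ z s : ℝ, (z = 0 ∨ z = 1) → (s = 0 ∨ s = 1) →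
        P {ω | Z ω = z ∧ S ω = s ∧ X ω = x} ≠ 0) →
      (∀ a b : ℝ, ((a = 1 ∧ b = 1) ∨ (a = 1 ∧ b = 0) ∨ (a = 0 ∧ b = 0)) →
        P {ω | S1 ω = a ∧ S0 ω = b ∧ X ω = x} ≠ 0) →
      0 < piX P X Z x → piX P X Z x < 1 →
      0 < pZs P X Z S 0 x → pZs P X Z S 1 x < 1 →
      pZs P X Z S 0 x < pZs P X Z S 1 x →
      (condMeanOn P {ω | X ω = x} (gA00 P X Z S) = 1 - pZs P X Z S 1 x) ∧
      (condMeanOn P {ω | X ω = x} (gA10 P X Z S)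
          = pZs P X Z S 1 x - pZs P X Z S 0 x) ∧
      (condMeanOn P {ω | X ω = x} (gA11 P X Z S) = pZs P X Z S 0 x) ∧
      (tauPO P X S1 S0 Y1 Y0 0 0 x
          = condMeanOn P {ω | X ω = x}
              (fun ω =>
                (phiA1_00 P X Z S Y ω - phiA0_00 P X Z S Y ω)
                  / condMeanOn P {ω' | X ω' = X ω} (gA00 P X Z S))) ∧
      (tauPO P X S1 S0 Y1 Y0 1 0 x
          = condMeanOn P {ω | X ω = x}
              (fun ω =>
                (phiA1_10 P X Z S Y ω - phiA0_10 P X Z S Y ω)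
                  / condMeanOn P {ω' | X ω' = X ω} (gA10 P X Z S))) ∧
      (tauPO P X S1 S0 Y1 Y0 1 1 x
          = condMeanOn P {ω | X ω = x}
              (fun ω =>
                (phiA1_11 P X Z S Y ω - phiA0_11 P X Z S Y ω)
                  / condMeanOn P {ω' | X ω' = X ω} (gA11 P X Z S))) := by
  intro x hPD hPC _ _ _ _ hp0 hp1 hp01
  have hD : MeasurableSet {ω | X ω = x} := hXm (measurableSet_singleton x)
  have hC0 := hPC 0 (Or.inl rfl)
  have hC1 := hPC 1 (Or.inr rfl)
  have hg00 : condMeanOn P {ω | X ω = x} (gA00 P X Z S) = 1 - pZs P X Z S 1 x :=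
    condMeanOn_psiA_one_sub_binary hZm hD hSm hS01 1 hC1
  have hg10 := condMeanOn_gA10 hZm hD hSm hS01 hC0 hC1
  have hg11 : condMeanOn P {ω | X ω = x} (gA11 P X Z S) = pZs P X Z S 0 x :=
    condMeanOn_psiA_binary hZm hD hSm hS01 0 hC0
  obtain ⟨hτ00, hτ10, hτ11⟩ := tauPO_eq_muZS_sub hD hZm hY1m hY0m hS1m hS0m hS1b hS0b hA1
    (hA2 x) hA3 (hA4 x hPD) hC0 hC1 hYi.integrableOn
  refine ⟨hg00, hg10, hg11, ?_, ?_, ?_⟩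
  · rw [condMeanOn_div_condMeanOn_fiber hD, hg00,
      condMeanOn_phiA_00_sub hZm hD hSm hS01 hYi.integrableOn hC0 hC1 (by linarith), hτ00,
      mul_div_cancel_left₀ _ (by linarith)]
  · rw [condMeanOn_div_condMeanOn_fiber hD, hg10,
      condMeanOn_phiA_10_sub hZm hD hSm hS01 hYi.integrableOn hC0 hC1 (by linarith) (by linarith),
      hτ10, mul_div_cancel_left₀ _ (by linarith)]
  · rw [condMeanOn_div_condMeanOn_fiber hD, hg11,
      condMeanOn_phiA_11_sub hZm hD hSm hS01 hYi.integrableOn hC0 hC1 (by linarith), hτ11,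
      mul_div_cancel_left₀ _ (by linarith)]

/-- EIF identification of the CPCEs: the denominator scores identify the principal
scores, and each CPCE is identified by the efficient-influence-function ratio. -/
theorem cpce_eif_identification
    {Ω : Type*} [MeasurableSpace Ω] (P : Measure Ω) [IsProbabilityMeasure P]
    {d : ℕ} (X : Ω → Fin d → ℝ) (Y Z S Y1 Y0 S1 S0 : Ω → ℝ)
    (hXm : Measurable X) (hYm : Measurable Y) (hZm : Measurable Z) (hSm : Measurable S)
    (hY1m : Measurable Y1) (hY0m : Measurable Y0) (hS1m : Measurable S1) (hS0m : Measurable S0)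
    (hZ01 : ∀ ω, Z ω = 0 ∨ Z ω = 1) (hS01 : ∀ ω, S ω = 0 ∨ S ω = 1)
    (hS1b : ∀ ω, S1 ω = 0 ∨ S1 ω = 1) (hS0b : ∀ ω, S0 ω = 0 ∨ S0 ω = 1)
    -- Assumption 1 (consistency)
    (hA1 : ∀ ω, Y ω = Y1 ω * Z ω + Y0 ω * (1 - Z ω) ∧ S ω = S1 ω * Z ω + S0 ω * (1 - Z ω))
    -- Assumption 2 (treatment ignorability): (Y(1),Y(0),S(1),S(0)) ⟂ Z | X
    (hA2 : ∀ (x : Fin d → ℝ) (A : Set (ℝ × ℝ × ℝ × ℝ)), MeasurableSet A → ∀ z : ℝ,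
      P ({ω | (Y1 ω, Y0 ω, S1 ω, S0 ω) ∈ A} ∩ {ω | Z ω = z} ∩ {ω | X ω = x})
          * P {ω | X ω = x}
        = P ({ω | (Y1 ω, Y0 ω, S1 ω, S0 ω) ∈ A} ∩ {ω | X ω = x})
            * P ({ω | Z ω = z} ∩ {ω | X ω = x}))
    -- Assumption 3 (monotonicity)
    (hA3 : ∀ᵐ ω ∂P, S0 ω ≤ S1 ω)
    -- Assumption 4 (principal ignorability)
    (hA4 : ∀ x : Fin d → ℝ, P {ω | X ω = x} ≠ 0 →
      condMeanOn P {ω | S1 ω = 1 ∧ S0 ω = 1 ∧ X ω = x} Y1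
          = condMeanOn P {ω | S1 ω = 1 ∧ S0 ω = 0 ∧ X ω = x} Y1 ∧
        condMeanOn P {ω | S1 ω = 0 ∧ S0 ω = 0 ∧ X ω = x} Y0
          = condMeanOn P {ω | S1 ω = 1 ∧ S0 ω = 0 ∧ X ω = x} Y0)
    (hYi : Integrable Y P) :
    ∀ x : Fin d → ℝ,
      P {ω | X ω = x} ≠ 0 →
      (∀ z : ℝ, z = 0 ∨ z = 1 → P {ω | Z ω = z ∧ X ω = x} ≠ 0) →
      (∀ z s : ℝ, (z = 0 ∨ z = 1) → (s = 0 ∨ s = 1) →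
        P {ω | Z ω = z ∧ S ω = s ∧ X ω = x} ≠ 0) →
      (∀ a b : ℝ, ((a = 1 ∧ b = 1) ∨ (a = 1 ∧ b = 0) ∨ (a = 0 ∧ b = 0)) →
        P {ω | S1 ω = a ∧ S0 ω = b ∧ X ω = x} ≠ 0) →
      0 < piX P X Z x → piX P X Z x < 1 →
      0 < pZs P X Z S 0 x → pZs P X Z S 1 x < 1 →
      pZs P X Z S 0 x < pZs P X Z S 1 x →
      (condMeanOn P {ω | X ω = x} (gA00 P X Z S) = 1 - pZs P X Z S 1 x) ∧
      (condMeanOn P {ω | X ω = x} (gA10 P X Z S)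
          = pZs P X Z S 1 x - pZs P X Z S 0 x) ∧
      (condMeanOn P {ω | X ω = x} (gA11 P X Z S) = pZs P X Z S 0 x) ∧
      (tauPO P X S1 S0 Y1 Y0 0 0 x
          = condMeanOn P {ω | X ω = x}
              (fun ω =>
                (phiA1_00 P X Z S Y ω - phiA0_00 P X Z S Y ω)
                  / condMeanOn P {ω' | X ω' = X ω} (gA00 P X Z S))) ∧
      (tauPO P X S1 S0 Y1 Y0 1 0 x
          = condMeanOn P {ω | X ω = x}
              (fun ω =>
                (phiA1_10 P X Z S Y ω - phiA0_10 P X Z S Y ω)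
                  / condMeanOn P {ω' | X ω' = X ω} (gA10 P X Z S))) ∧
      (tauPO P X S1 S0 Y1 Y0 1 1 x
          = condMeanOn P {ω | X ω = x}
              (fun ω =>
                (phiA1_11 P X Z S Y ω - phiA0_11 P X Z S Y ω)
                  / condMeanOn P {ω' | X ω' = X ω} (gA11 P X Z S))) :=
  cpce_eif_identification_general P X Y Z S Y1 Y0 S1 S0 hXm hZm hSm hY1m hY0m hS1m hS0m hS01 hS1b
    hS0b hA1 hA2 hA3 hA4 hYi
end
end

section
/- (Vanishing linear-smoother remainder term.) Fix x ∈ ℝ^d. For each n, let w_1,...,w_n be (possibly random) weights and X_1,...,X_n random points in ℝ^d, and let c, s : ℝ^d → ℝ. Assume: (1) weight regularity — there exists C < ∞ with Σ_{i=1}^n |w_i(x)| ≤ C almost surely for all n; (2) localization — for every δ > 0, Σ_{i=1}^n |w_i(x)|·1{|X_i − x| > δ} → 0 in probability as n → ∞; (3) c is continuous at x and uniformly bounded by M_a, and s is uniformly bounded by M_b. Then T_n(x) := Σ_{i=1}^n w_i(x)·(c(X_i) − c(x))·s(X_i) → 0 in probability as n → ∞. -/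
open MeasureTheory Filter
open scoped Classical

noncomputable section

/-!
Split the sum according to whether `X_i` lies within `δ` of `x`. Near `x`, continuity makes
`|c(X_i) - c(x)|` small, and the total weight is at most `C`; far from `x`, the summand is at most
`2 Ma Mb |w_i|`, and the far weight tends to `0` in probability by localization. Hence `|T_n|` is
bounded by an arbitrarily small constant plus a multiple of a sequence tending to `0` in
probability.
-/

lemma Finset.abs_sum_mul_le_near_add_far {ι : Type*} (t : Finset ι) (w f : ι → ℝ)
    (far : ι → Prop) [DecidablePred far] {a b : ℝ} (ha : 0 ≤ a)
    (hnear : ∀ i, ¬ far i → |f i| ≤ a) (hfar : ∀ i, |f i| ≤ b) :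
    |∑ i ∈ t, w i * f i|
      ≤ a * ∑ i ∈ t, |w i| + b * ∑ i ∈ t, |w i| * (if far i then 1 else 0) := by
  rw [Finset.mul_sum, Finset.mul_sum, ← Finset.sum_add_distrib]
  refine (Finset.abs_sum_le_sum_abs _ _).trans (Finset.sum_le_sum fun i _ => ?_)
  rw [abs_mul]
  by_cases hi : far i
  · simp only [hi, if_true, mul_one]
    nlinarith [hfar i, abs_nonneg (w i)]
  · simp only [hi, if_false, mul_zero, add_zero]
    nlinarith [hnear i hi, abs_nonneg (w i)]

lemma abs_sub_mul_le_two_mul {α : Type*} {c s : α → ℝ} {Ma Mb : ℝ}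
    (hc : ∀ y, |c y| ≤ Ma) (hs : ∀ y, |s y| ≤ Mb) (x y : α) :
    |(c y - c x) * s y| ≤ 2 * Ma * Mb := by
  rw [abs_mul, mul_assoc 2, ← mul_assoc, two_mul]
  exact mul_le_mul ((abs_sub _ _).trans (add_le_add (hc y) (hc x))) (hs y)
    (abs_nonneg _) (by linarith [hc x, abs_nonneg (c x)])

namespace MeasureTheory

lemma tendstoInMeasure_zero_of_abs_le_add_mul {α ι : Type*} [MeasurableSpace α] {μ : Measure α}
    {l : Filter ι} {f : ι → α → ℝ} (K : ℝ)
    (h : ∀ η > 0, ∃ g : ι → α → ℝ, TendstoInMeasure μ g l (fun _ => 0) ∧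
      ∀ i, ∀ᵐ a ∂μ, |f i a| ≤ η + K * |g i a|) :
    TendstoInMeasure μ f l (fun _ => 0) := by
  rw [tendstoInMeasure_iff_dist]
  intro ε hε
  obtain ⟨g, hg, hfg⟩ := h (ε / 2) (half_pos hε)
  have hg' := tendstoInMeasure_iff_dist.1 hg (ε / (2 * (|K| + 1))) (by positivity)
  refine tendsto_of_tendsto_of_tendsto_of_le_of_le tendsto_const_nhds hg' (fun _ => zero_le)
    fun i => measure_mono_ae ((hfg i).mono fun a hfa (hεf : ε ≤ dist (f i a) 0) => ?_)
  show ε / (2 * (|K| + 1)) ≤ dist (g i a) 0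
  rw [Real.dist_0_eq_abs] at hεf ⊢
  rw [div_le_iff₀ (by positivity)]
  nlinarith [le_abs_self K, abs_nonneg (g i a)]

end MeasureTheory

theorem linear_smoother_remainder_vanishes_general
    {Ω : Type*} [MeasurableSpace Ω] (P : Measure Ω)
    {d : ℕ} (x : EuclideanSpace ℝ (Fin d))
    (w : ℕ → ℕ → Ω → ℝ) (Xp : ℕ → ℕ → Ω → EuclideanSpace ℝ (Fin d))
    (c s : EuclideanSpace ℝ (Fin d) → ℝ)
    -- (1) weight regularity
    (C : ℝ)
    (hreg : ∀ n, ∀ᵐ ω ∂P, ∑ i ∈ Finset.range n, |w n i ω| ≤ C)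
    -- (2) localization
    (hloc : ∀ δ : ℝ, 0 < δ →
      TendstoInMeasure P
        (fun n ω => ∑ i ∈ Finset.range n,
          |w n i ω| * (if δ < ‖Xp n i ω - x‖ then (1 : ℝ) else 0))
        atTop (fun _ => (0 : ℝ)))
    -- (3) continuity and boundedness
    (Ma Mb : ℝ)
    (hccont : ContinuousAt c x)
    (hcbdd : ∀ y, |c y| ≤ Ma) (hsbdd : ∀ y, |s y| ≤ Mb) :
    TendstoInMeasure P
      (fun n ω => ∑ i ∈ Finset.range n,
        w n i ω * (c (Xp n i ω) - c x) * s (Xp n i ω))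
      atTop (fun _ => (0 : ℝ)) := by
  have hMb : 0 ≤ Mb := (abs_nonneg _).trans (hsbdd x)
  refine tendstoInMeasure_zero_of_abs_le_add_mul (2 * Ma * Mb) fun η hη => ?_
  -- chosen so that the near part `η' * Mb * ∑ |w_i|` stays below `η`
  set η' := η / (Mb * |C| + 1)
  obtain ⟨δ, hδ, hcδ⟩ := (Metric.nhds_basis_closedBall.tendsto_iff Metric.nhds_basis_ball).1
    hccont η' (by positivity)
  refine ⟨_, hloc δ hδ, fun n => ?_⟩
  filter_upwards [hreg n] with ω hω
  have hnear : ∀ y, ¬ δ < ‖y - x‖ → |(c y - c x) * s y| ≤ η' * Mb := fun y hy => by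
    have hcy := hcδ y (mem_closedBall_iff_norm.2 (not_lt.1 hy))
    rw [Metric.mem_ball, Real.dist_eq] at hcy
    rw [abs_mul]
    exact mul_le_mul hcy.le (hsbdd y) (abs_nonneg _) (by positivity)
  simp_rw [mul_assoc (w n _ ω)]
  refine (Finset.abs_sum_mul_le_near_add_far _ _ _ (fun i => δ < ‖Xp n i ω - x‖)
    (by positivity) (fun i => hnear _) (fun i => abs_sub_mul_le_two_mul hcbdd hsbdd x _)).trans ?_
  rw [abs_of_nonneg (Finset.sum_nonneg fun i _ => by positivity)]
  gcongr
  calc η' * Mb * ∑ i ∈ Finset.range n, |w n i ω| ≤ η' * (Mb * |C|) := by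
        rw [mul_assoc]; gcongr; exact hω.trans (le_abs_self C)
    _ ≤ η := by
        rw [div_mul_eq_mul_div, div_le_iff₀ (by positivity)]; nlinarith

/-- Vanishing linear-smoother remainder term: if the (random) smoother weights are
uniformly summable and localize around `x`, `c` is continuous at `x` and uniformly
bounded, and `s` is uniformly bounded, then the remainder
`T_n = Σ_i w_i (c(X_i) - c(x)) s(X_i)` tends to `0` in probability. -/
theorem linear_smoother_remainder_vanishes
    {Ω : Type*} [MeasurableSpace Ω] (P : Measure Ω) [IsProbabilityMeasure P]
    {d : ℕ} (x : EuclideanSpace ℝ (Fin d))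
    (w : ℕ → ℕ → Ω → ℝ) (Xp : ℕ → ℕ → Ω → EuclideanSpace ℝ (Fin d))
    (c s : EuclideanSpace ℝ (Fin d) → ℝ)
    (hwm : ∀ n i, Measurable (w n i)) (hXpm : ∀ n i, Measurable (Xp n i))
    -- (1) weight regularity
    (C : ℝ)
    (hreg : ∀ n, ∀ᵐ ω ∂P, ∑ i ∈ Finset.range n, |w n i ω| ≤ C)
    -- (2) localization
    (hloc : ∀ δ : ℝ, 0 < δ →
      TendstoInMeasure P
        (fun n ω => ∑ i ∈ Finset.range n,
          |w n i ω| * (if δ < ‖Xp n i ω - x‖ then (1 : ℝ) else 0))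
        atTop (fun _ => (0 : ℝ)))
    -- (3) continuity and boundedness
    (Ma Mb : ℝ)
    (hccont : ContinuousAt c x)
    (hcbdd : ∀ y, |c y| ≤ Ma) (hsbdd : ∀ y, |s y| ≤ Mb) :
    TendstoInMeasure P
      (fun n ω => ∑ i ∈ Finset.range n,
        w n i ω * (c (Xp n i ω) - c x) * s (Xp n i ω))
      atTop (fun _ => (0 : ℝ)) :=
  linear_smoother_remainder_vanishes_general P x w Xp c s C hreg hloc Ma Mb hccont hcbdd hsbdd
end
end
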